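/- Define f_fix(I) = 1/2 + (1/2)√(1 − (1/64)(I − 1 + √((I+3)(I−5)))²) for I ∈ [5, 6]. Then f_fix(6) = 1/2, f_fix(5) = 1/2 + √3/4, and the maximum over I ∈ [5, 6] of (f_fix(I) − 1)/(I − 5) is attained at I* = (4 + 5√7)/3, where f_fix(I*) = (3 + √7)/8. -/
import Mathlib

set_option maxHeartbeats 2000000


open Real

/-- The fixed-setting guessing probability curve for the three-setting Bell
expression. -/
noncomputable def fFix (I : ℝ) : ℝ :=
  1 / 2 + Real.sqrt (1 - (1 / 64) * (I - 1 + Real.sqrt ((I + 3) * (I - 5))) ^ 2) / 2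

/-- `f_fix(6) = 1/2`, `f_fix(5) = 1/2 + √3/4`, and the maximum of
`(f_fix(I) − 1)/(I − 5)` over `I ∈ (5, 6]` is attained at `I* = (4 + 5√7)/3`,
where `f_fix(I*) = (3 + √7)/8`. -/
theorem fFix_properties :
    fFix 6 = 1 / 2 ∧
    fFix 5 = 1 / 2 + Real.sqrt 3 / 4 ∧
    fFix ((4 + 5 * Real.sqrt 7) / 3) = (3 + Real.sqrt 7) / 8 ∧
    (4 + 5 * Real.sqrt 7) / 3 ∈ Set.Ioc (5 : ℝ) 6 ∧
    ∀ I ∈ Set.Ioc (5 : ℝ) 6,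
      (fFix I - 1) / (I - 5)
        ≤ (fFix ((4 + 5 * Real.sqrt 7) / 3) - 1) / ((4 + 5 * Real.sqrt 7) / 3 - 5) := by
  set r := Real.sqrt 7 with hrdef
  have hr0 : (0:ℝ) ≤ r := Real.sqrt_nonneg 7
  have hr : r ^ 2 = 7 := Real.sq_sqrt (by norm_num)
  have hr26 : 2.6 ≤ r := by nlinarith
  have hr27 : r ≤ 2.7 := by nlinarith
  have h1 : fFix 6 = 1 / 2 := by
    unfold fFix
    rw [show ((6:ℝ) + 3) * (6 - 5) = 3 ^ 2 by norm_num,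
      Real.sqrt_sq (by norm_num : (0:ℝ) ≤ 3),
      show (1:ℝ) - 1 / 64 * (6 - 1 + 3) ^ 2 = 0 by norm_num, Real.sqrt_zero]
    norm_num
  have h2 : fFix 5 = 1 / 2 + Real.sqrt 3 / 4 := by
    unfold fFix
    rw [show ((5:ℝ) + 3) * (5 - 5) = 0 by norm_num, Real.sqrt_zero,
      show (1:ℝ) - 1 / 64 * (5 - 1 + 0) ^ 2 = (Real.sqrt 3 / 2) ^ 2 by
        rw [div_pow, Real.sq_sqrt (by norm_num : (0:ℝ) ≤ 3)]; norm_num,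
      Real.sqrt_sq (by positivity)]
    ring
  have h3 : fFix ((4 + 5 * r) / 3) = (3 + r) / 8 := by
    unfold fFix
    rw [show ((4 + 5 * r) / 3 + 3) * ((4 + 5 * r) / 3 - 5) = ((5 + r) / 3) ^ 2 by
        linear_combination (8/3) * hr,
      Real.sqrt_sq (by linarith : (0:ℝ) ≤ (5 + r) / 3),
      show (1:ℝ) - 1 / 64 * ((4 + 5 * r) / 3 - 1 + (5 + r) / 3) ^ 2 = ((r - 1) / 4) ^ 2 by
        linear_combination (-1/8) * hr,
      Real.sqrt_sq (by linarith : (0:ℝ) ≤ (r - 1) / 4)]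
    ring
  have hI5' : (5:ℝ) < (4 + 5 * r) / 3 := by nlinarith
  have hI6' : (4 + 5 * r) / 3 ≤ 6 := by nlinarith
  refine ⟨h1, h2, h3, ⟨hI5', hI6'⟩, ?_⟩
  intro I hI
  obtain ⟨hI5, hI6⟩ := hI
  have hden : (0:ℝ) < (4 + 5 * r) / 3 - 5 := by linarith
  have hrhs : (fFix ((4 + 5 * r) / 3) - 1) / ((4 + 5 * r) / 3 - 5) = -(10 + 7 * r) / 72 := by
    rw [h3, div_eq_iff (ne_of_gt hden)]
    linear_combination (35/216) * hr
  rw [hrhs, div_le_iff₀ (by linarith : (0:ℝ) < I - 5)]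
  unfold fFix
  have hIs : (0:ℝ) ≤ (I + 3) * (I - 5) := mul_nonneg (by linarith) (by linarith)
  set s := Real.sqrt ((I + 3) * (I - 5)) with hsdef
  have hs0 : 0 ≤ s := Real.sqrt_nonneg _
  have hs2 : s ^ 2 = (I + 3) * (I - 5) := Real.sq_sqrt hIs
  have hB : 0 ≤ 1 - (10 + 7 * r) / 36 * (I - 5) := by
    nlinarith [mul_nonneg (by linarith : (0:ℝ) ≤ 6 - I) (by linarith : (0:ℝ) ≤ 10 + 7 * r)]
  have hmain : 64 - 64 * (1 - (10 + 7 * r) / 36 * (I - 5)) ^ 2 - (I - 1) ^ 2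
      - (I + 3) * (I - 5) ≤ 2 * (I - 1) * s := by
    rcases le_or_gt (64 - 64 * (1 - (10 + 7 * r) / 36 * (I - 5)) ^ 2 - (I - 1) ^ 2
        - (I + 3) * (I - 5)) 0 with hneg | hpos
    · have h := mul_nonneg (show (0:ℝ) ≤ 2 * (I - 1) by linarith) hs0
      linarith
    · have hA : 0 ≤ 3489928 * I ^ 2 + 555520 * r * I ^ 2 - 27452176 * I - 9594112 * r * I
          + 54776776 + 33512320 * r := by
        nlinarith [mul_nonneg (by linarith : (0:ℝ) ≤ I - 5) (by linarith : (0:ℝ) ≤ r - 2.6),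
          mul_nonneg (by linarith : (0:ℝ) ≤ 6 - I) (by linarith : (0:ℝ) ≤ r - 2.6),
          mul_nonneg (by linarith : (0:ℝ) ≤ I - 5) (by linarith : (0:ℝ) ≤ 6 - I),
          sq_nonneg (I - 53/10), sq_nonneg (I - 27/5)]
      have hid : 59049 * (4 * (I - 1) ^ 2 * ((I + 3) * (I - 5))
            - (64 - 64 * (1 - (10 + 7 * r) / 36 * (I - 5)) ^ 2 - (I - 1) ^ 2
              - (I + 3) * (I - 5)) ^ 2)
          = (3 * I - 4 - 5 * r) ^ 2
            * (393660 * (64 - 64 * (1 - (10 + 7 * r) / 36 * (I - 5)) ^ 2 - (I - 1) ^ 2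
                - (I + 3) * (I - 5))
              + (3489928 * I ^ 2 + 555520 * r * I ^ 2 - 27452176 * I - 9594112 * r * I
                + 54776776 + 33512320 * r)) := by
        linear_combination (563224000 + 916616000 * r + 379260000 * r ^ 2
          - 214787200 * I - 259661600 * I * r - 65268000 * I * r ^ 2
          + 1550128 * I ^ 2 - 25016320 * I ^ 2 * r - 28047600 * I ^ 2 * r ^ 2
          - 3157728 * I ^ 3 + 18049248 * I ^ 3 * r + 6914880 * I ^ 3 * r ^ 2
          + 1347696 * I ^ 4 - 1975680 * I ^ 4 * r - 345744 * I ^ 4 * r ^ 2) * hr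
      have hprod : 0 ≤ (3 * I - 4 - 5 * r) ^ 2
          * (393660 * (64 - 64 * (1 - (10 + 7 * r) / 36 * (I - 5)) ^ 2 - (I - 1) ^ 2
              - (I + 3) * (I - 5))
            + (3489928 * I ^ 2 + 555520 * r * I ^ 2 - 27452176 * I - 9594112 * r * I
              + 54776776 + 33512320 * r)) :=
        mul_nonneg (sq_nonneg _) (by linarith)
      have hD : (64 - 64 * (1 - (10 + 7 * r) / 36 * (I - 5)) ^ 2 - (I - 1) ^ 2
          - (I + 3) * (I - 5)) ^ 2 ≤ 4 * (I - 1) ^ 2 * ((I + 3) * (I - 5)) := by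
        linarith [hid, hprod]
      have hsq : (2 * (I - 1) * s) ^ 2 = 4 * (I - 1) ^ 2 * ((I + 3) * (I - 5)) := by
        rw [mul_pow, mul_pow, hs2]; ring
      nlinarith [hD, hsq, hpos, mul_nonneg (show (0:ℝ) ≤ 2 * (I - 1) by linarith) hs0]
  have hexp : (I - 1 + s) ^ 2 = (I - 1) ^ 2 + 2 * (I - 1) * s + (I + 3) * (I - 5) := by
    rw [← hs2]; ring
  have hEB : 1 - 1 / 64 * (I - 1 + s) ^ 2 ≤ (1 - (10 + 7 * r) / 36 * (I - 5)) ^ 2 := by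
    nlinarith [hmain, hexp]
  have hsqrt : Real.sqrt (1 - 1 / 64 * (I - 1 + s) ^ 2) ≤ 1 - (10 + 7 * r) / 36 * (I - 5) := by
    calc Real.sqrt (1 - 1 / 64 * (I - 1 + s) ^ 2)
        ≤ Real.sqrt ((1 - (10 + 7 * r) / 36 * (I - 5)) ^ 2) := Real.sqrt_le_sqrt hEB
      _ = 1 - (10 + 7 * r) / 36 * (I - 5) := Real.sqrt_sq hB
  nlinarith [hsqrt]
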